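/- (Theorem 2, part 2: Poisson–logarithmic joint count distribution factorizes as negative binomial times Chinese restaurant table distribution.) Let r > 0 be real, p ∈ (0,1), λ = −r·log(1−p), and let x, j ∈ ℕ with x ≥ 1. Then (e^{−λ} · λʲ / j!) · g_p^{*j}(x) = f_{r,p}(x) · ( c(x,j) · rʲ / P_x(r) ), where P_x(r) = r·(r+1)⋯(r+x−1) is the ascending factorial (the evaluation at r of ascPochhammer ℝ x) and c(x,j)·rʲ/P_x(r) is the pmf of the Chinese restaurant table distribution CRT(x, r). Hence the bivariate count (X, l) of the compound-Poisson representation can equivalently be generated as X ∼ NB(r,p) followed by l ∼ CRT(X, r). -/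

import Mathlib

/-- The negative binomial pmf with real shape `r > 0` and success parameter `p ∈ (0,1)`:
`f_{r,p}(n) = Γ(n+r) / (n! · Γ(r)) · pⁿ · (1−p)ʳ`. -/
noncomputable def nbPMF (r p : ℝ) (n : ℕ) : ℝ :=
  Real.Gamma ((n : ℝ) + r) / ((n.factorial : ℝ) * Real.Gamma r) * p ^ n * (1 - p) ^ r

/-- The logarithmic pmf with parameter `p ∈ (0,1)`:
`g_p(k) = −p^k / (k · log(1−p))` for `k ≥ 1` and `g_p(0) = 0`. -/
noncomputable def logPMF (p : ℝ) (k : ℕ) : ℝ :=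
  if k = 0 then 0 else -(p ^ k) / ((k : ℝ) * Real.log (1 - p))

/-- The `j`-fold convolution power of the logarithmic pmf. -/
noncomputable def logConvPow (p : ℝ) : ℕ → ℕ → ℝ
  | 0, x => if x = 0 then 1 else 0
  | j + 1, x => ∑ k ∈ Finset.range (x + 1), logConvPow p j k * logPMF p (x - k)


/-! With `L = -log(1 - X) = ∑ Xⁿ / n`, the exponential generating function `∑ c(n,k) Xⁿ / n!` of
the Stirling numbers is `L^k / k!`: both vanish at `0` and satisfy `(1 - X) F'_{k+1} = F_k`, by the
recurrence `c(n+1, k+1) = n c(n, k+1) + c(n, k)` on one side and by `(1 - X) L' = 1` on the other.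
The generating function of `g_p` is `L(pX) / L(p)`, so `g_p^{*j}(x) = j! c(x,j) pˣ / (x! L(p)ʲ)`.
With `Γ(x + r) = P_x(r) Γ(r)` and `e^{-λ} = (1 - p)ʳ`, both sides become `(1 - p)ʳ pˣ c(x,j) rʲ / x!`.
-/

open PowerSeries Nat

theorem coeff_ascPochhammer_nat_eq_stirlingFirst (n k : ℕ) :
    (ascPochhammer ℕ n).coeff k = stirlingFirst n k := by
  induction n generalizing k with
  | zero => cases k <;> simp [Polynomial.coeff_one]
  | succ n ih =>
    cases k with
    | zero => simp [Polynomial.coeff_zero_eq_eval_zero]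
    | succ k =>
      rw [ascPochhammer_succ_right, mul_add, Polynomial.coeff_add, Polynomial.coeff_mul_X,
        ← Polynomial.C_eq_natCast, Polynomial.coeff_mul_C, ih, ih, stirlingFirst_succ_succ,
        Nat.cast_id]
      ring

namespace PowerSeries

variable {K : Type*} [Field K]

theorem one_sub_X_ne_zero : (1 - X : K⟦X⟧) ≠ 0 := fun h => by
  simpa using congrArg (coeff 0) h

variable (K)

noncomputable def stirlingFirstEGF (k : ℕ) : K⟦X⟧ := mk fun n => (stirlingFirst n k : K) / n !

theorem coeff_stirlingFirstEGF (k n : ℕ) :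
    coeff n (stirlingFirstEGF K k) = (stirlingFirst n k : K) / n ! :=
  coeff_mk _ _

variable [CharZero K]

noncomputable def negLogOneSub : K⟦X⟧ := -rescale (-1) (log K)

variable {K}

theorem coeff_negLogOneSub (n : ℕ) :
    coeff n (negLogOneSub K) = if n = 0 then 0 else (n : K)⁻¹ := by
  rcases n with _ | n
  · rw [negLogOneSub, map_neg, coeff_rescale]
    simp
  · simp [negLogOneSub, pow_succ, ← mul_div_assoc, ← pow_add, ← two_mul, pow_mul, neg_div]

theorem constantCoeff_negLogOneSub : constantCoeff (negLogOneSub K) = 0 := by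
  simpa using coeff_negLogOneSub (K := K) 0

theorem one_sub_X_mul_derivative_negLogOneSub : (1 - X) * d⁄dX K (negLogOneSub K) = 1 := by
  have : d⁄dX K (negLogOneSub K) = mk 1 := by
    ext n
    rw [coeff_derivative, coeff_negLogOneSub, if_neg n.succ_ne_zero, coeff_mk]
    push_cast
    field_simp
    simp
  rw [this, mul_comm, mk_one_mul_one_sub_eq_one]

theorem coeff_derivative_stirlingFirstEGF (k n : ℕ) :
    coeff n (d⁄dX K (stirlingFirstEGF K k)) = (stirlingFirst (n + 1) k : K) / n ! := by
  rw [coeff_derivative, coeff_stirlingFirstEGF K, factorial_succ]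
  push_cast
  field_simp

theorem one_sub_X_mul_derivative_stirlingFirstEGF (k : ℕ) :
    (1 - X) * d⁄dX K (stirlingFirstEGF K (k + 1)) = stirlingFirstEGF K k := by
  ext n
  rw [sub_mul, one_mul, map_sub, coeff_stirlingFirstEGF K]
  rcases n with _ | n
  · simp [coeff_derivative_stirlingFirstEGF, stirlingFirst_succ_succ]
  · rw [coeff_succ_X_mul, coeff_derivative_stirlingFirstEGF, coeff_derivative_stirlingFirstEGF,
      stirlingFirst_succ_succ (n + 1), factorial_succ]
    push_cast
    field_simp
    ring

theorem stirlingFirstEGF_eq (k : ℕ) :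
    stirlingFirstEGF K k = C (k ! : K)⁻¹ * negLogOneSub K ^ k := by
  induction k with
  | zero =>
    ext n
    rcases n with _ | n <;> simp [stirlingFirstEGF, coeff_one]
  | succ k ih =>
    refine derivative.ext (mul_left_cancel₀ one_sub_X_ne_zero ?_) ?_
    · rw [one_sub_X_mul_derivative_stirlingFirstEGF, ih, Derivation.leibniz, derivative_C,
        smul_zero, add_zero, derivative_pow, smul_eq_mul, mul_left_comm, mul_left_comm (1 - X),
        one_sub_X_mul_derivative_negLogOneSub, factorial_succ]
      simp only [add_tsub_cancel_right, mul_one, ← map_natCast C, ← mul_assoc, ← map_mul]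
      push_cast
      field_simp
    · simp [stirlingFirstEGF, constantCoeff_negLogOneSub]

theorem coeff_negLogOneSub_pow (k n : ℕ) :
    coeff n (negLogOneSub K ^ k) = k ! * stirlingFirst n k / n ! := by
  have h := congrArg (coeff n) (stirlingFirstEGF_eq (K := K) k)
  rw [coeff_stirlingFirstEGF K, coeff_C_mul] at h
  rw [mul_div_assoc, h, mul_inv_cancel_left₀ (Nat.cast_ne_zero.mpr (factorial_ne_zero k))]

end PowerSeries

theorem logConvPow_eq_coeff_pow (p : ℝ) (j x : ℕ) :
    logConvPow p j x = coeff x (mk (logPMF p) ^ j) := by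
  induction j generalizing x with
  | zero => simp [logConvPow, coeff_one]
  | succ j ih =>
    rw [logConvPow, pow_succ, coeff_mul, Finset.Nat.sum_antidiagonal_eq_sum_range_succ_mk]
    simp only [ih, coeff_mk]

theorem mk_logPMF (p : ℝ) :
    mk (logPMF p) = C (-Real.log (1 - p))⁻¹ * rescale p (negLogOneSub ℝ) := by
  ext n
  rw [coeff_C_mul, coeff_rescale, coeff_negLogOneSub, coeff_mk, logPMF]
  split_ifs
  · simp
  · field_simp

theorem logConvPow_eq (p : ℝ) (j x : ℕ) :
    logConvPow p j x = j ! * stirlingFirst x j / x ! * p ^ x / (-Real.log (1 - p)) ^ j := by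
  rw [logConvPow_eq_coeff_pow, mk_logPMF, mul_pow, ← map_pow, ← map_pow, coeff_C_mul,
    coeff_rescale, coeff_negLogOneSub_pow, inv_pow]
  ring

theorem Real.Gamma_nat_add_eq_eval_ascPochhammer_mul {r : ℝ} (hr : 0 < r) (n : ℕ) :
    Real.Gamma (n + r) = (ascPochhammer ℝ n).eval r * Real.Gamma r := by
  induction n with
  | zero => simp
  | succ n ih =>
    rw [Nat.cast_succ, add_right_comm, Real.Gamma_add_one (by positivity), ih,
      ascPochhammer_succ_eval]
    ring

theorem nbPMF_eq {r : ℝ} (hr : 0 < r) (p : ℝ) (n : ℕ) :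
    nbPMF r p n = (ascPochhammer ℝ n).eval r / n ! * p ^ n * (1 - p) ^ r := by
  rw [nbPMF, Real.Gamma_nat_add_eq_eval_ascPochhammer_mul hr,
    mul_div_mul_right _ _ (Real.Gamma_pos_of_pos hr).ne']

theorem poisson_log_eq_negBinomial_mul_crt_general (r p : ℝ) (hr : 0 < r)
    (hp : p ∈ Set.Ioo (0:ℝ) 1) (x j : ℕ) :
    (Real.exp (-(-r * Real.log (1 - p))) * (-r * Real.log (1 - p)) ^ j /
        (j.factorial : ℝ)) * logConvPow p j x =
      nbPMF r p x *
        (((ascPochhammer ℕ x).coeff j : ℝ) * r ^ j / (ascPochhammer ℝ x).eval r) := by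
  obtain ⟨hp0, hp1⟩ := hp
  have hlog : -Real.log (1 - p) ≠ 0 :=
    (neg_pos.mpr (Real.log_neg (by linarith) (by linarith))).ne'
  have hexp : Real.exp (-(-r * Real.log (1 - p))) = (1 - p) ^ r := by
    rw [Real.rpow_def_of_pos (by linarith)]
    ring_nf
  have hasc : (ascPochhammer ℝ x).eval r ≠ 0 := (ascPochhammer_pos x r hr).ne'
  rw [hexp, show -r * Real.log (1 - p) = r * -Real.log (1 - p) by ring, mul_pow, logConvPow_eq,
    nbPMF_eq hr, coeff_ascPochhammer_nat_eq_stirlingFirst]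
  field_simp

/-- Poisson–logarithmic joint count distribution factorizes as negative binomial times
the Chinese restaurant table distribution: with `λ = −r·log(1−p)`, for `x ≥ 1`,
`(e^{−λ}·λʲ/j!) · g_p^{*j}(x) = f_{r,p}(x) · (c(x,j)·rʲ / P_x(r))`,
where `P_x(r)` is the ascending factorial `r·(r+1)⋯(r+x−1)` and `c(x,j)` the unsigned
Stirling number of the first kind. -/
theorem poisson_log_eq_negBinomial_mul_crt (r p : ℝ) (hr : 0 < r)
    (hp : p ∈ Set.Ioo (0:ℝ) 1) (x j : ℕ) (hx : 1 ≤ x) :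
    (Real.exp (-(-r * Real.log (1 - p))) * (-r * Real.log (1 - p)) ^ j /
        (j.factorial : ℝ)) * logConvPow p j x =
      nbPMF r p x *
        (((ascPochhammer ℕ x).coeff j : ℝ) * r ^ j / (ascPochhammer ℝ x).eval r) :=
  poisson_log_eq_negBinomial_mul_crt_general r p hr hp x j
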